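/- In the setting of the block Lyapunov decomposition with A₁ = A_α − BF_α, A₂ = A_α − K_αC, A₁₂ = −BF_α, Q₁₁ = Q + F_αᵀRF_α, Q₁₂ = F_αᵀRF_α, Q₂₂ = F_αᵀRF_α: if F_α = R⁻¹BᵀX_α where X_α is symmetric and solves A_αᵀX_α + X_αA_α + Q − X_αBR⁻¹BᵀX_α = 0, and A₁, A₂ are Hurwitz, then the unique solution of the joint Lyapunov equation has X̃₁₁ = X_α and X̃₁₂ = 0. -/

import Mathlib

/-!
The (1,1) block of the joint Lyapunov equation is the Lyapunov equation of the closed loop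
`A₁ = A_α - B F_α` with cost `Q + F_αᵀ R F_α`, which `X_α` also solves thanks to the Riccati
equation. Once `X̃₁₁ = X_α`, the coupling term `X_α (-B F_α)` of the (1,2) block cancels the
cost `F_αᵀ R F_α` because `F_αᵀ R = X_α B`, leaving `A₁ᵀ X̃₁₂ + X̃₁₂ A₂ = 0`. Both equations have
unique solutions: for Hurwitz `A₁`, `A₂` the spectra of `A₁ᵀ` and `-A₂` are disjoint, and a
Sylvester equation `A X = X B` with disjoint spectra only has the solution `0`.
-/

open Matrix MeasureTheory Set

attribute [local instance] Matrix.normedAddCommGroup Matrix.normedSpace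

/-- Matrix exponential over the reals. -/
noncomputable def mexp {n : Type*} [Fintype n] [DecidableEq n] (A : Matrix n n ℝ) :
    Matrix n n ℝ :=
  NormedSpace.exp A

/-- A real square matrix is Hurwitz if all its complex eigenvalues have negative real part. -/
def IsHurwitz {n : Type*} [Fintype n] [DecidableEq n] (A : Matrix n n ℝ) : Prop :=
  ∀ μ ∈ spectrum ℂ (A.map (algebraMap ℝ ℂ)), μ.re < 0

namespace Matrix

section Sylvester

open Polynomial

variable {n k : Type*} [Fintype n] [Fintype k] [DecidableEq n] [DecidableEq k]

theorem aeval_mul_eq_mul_aeval_of_mul_eq_mul {K : Type*} [CommRing K] {A : Matrix n n K}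
    {B : Matrix k k K} {X : Matrix n k K} (h : A * X = X * B) (q : K[X]) :
    aeval A q * X = X * aeval B q := by
  induction q using Polynomial.induction_on with
  | C a => simp [Algebra.algebraMap_eq_smul_one]
  | add p r hp hr => rw [map_add, map_add, Matrix.add_mul, Matrix.mul_add, hp, hr]
  | monomial i a ih =>
    rw [pow_succ, ← mul_assoc, map_mul (aeval A), map_mul (aeval B), aeval_X, aeval_X,
      Matrix.mul_assoc, h, ← Matrix.mul_assoc, ih, Matrix.mul_assoc]

theorem mem_spectrum_transpose_iff {K : Type*} [Field K] (M : Matrix n n K) (μ : K) :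
    μ ∈ spectrum K Mᵀ ↔ μ ∈ spectrum K M := by
  rw [mem_spectrum_iff_isRoot_charpoly, mem_spectrum_iff_isRoot_charpoly, charpoly_transpose]

/-- For the characteristic polynomial `q` of `B` we have `q(A) X = X q(B) = 0` by
Cayley–Hamilton, while `q(A)` is invertible by the spectral mapping theorem. -/
theorem eq_zero_of_mul_eq_mul_of_disjoint_spectrum {K : Type*} [Field K] [IsAlgClosed K]
    {A : Matrix n n K} {B : Matrix k k K} {X : Matrix n k K}
    (hAB : Disjoint (spectrum K A) (spectrum K B)) (h : A * X = X * B) : X = 0 := by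
  cases isEmpty_or_nonempty n
  · exact Subsingleton.elim _ _
  have hq : aeval A B.charpoly * X = 0 := by
    rw [aeval_mul_eq_mul_aeval_of_mul_eq_mul h, aeval_self_charpoly, Matrix.mul_zero]
  have hunit : IsUnit (aeval A B.charpoly) := by
    rw [← spectrum.zero_notMem_iff K, spectrum.map_polynomial_aeval_of_nonempty A _
      (spectrum.nonempty_of_isAlgClosed_of_finiteDimensional K A)]
    rintro ⟨μ, hμA, hμB⟩
    exact hAB.notMem_of_mem_left hμA (mem_spectrum_iff_isRoot_charpoly.mpr hμB)
  obtain ⟨u, hu⟩ := hunit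
  simpa [← hu, ← Matrix.mul_assoc] using
    congrArg (((u⁻¹ : (Matrix n n K)ˣ) : Matrix n n K) * ·) hq

end Sylvester

section Blocks

variable {𝕜 : Type*} [CommRing 𝕜] {n₁ n₂ : Type*} [Fintype n₁] [Fintype n₂]

theorem lyapunov_fromBlocks_upper {A₁ : Matrix n₁ n₁ 𝕜} {A₁₂ : Matrix n₁ n₂ 𝕜}
    {A₂ : Matrix n₂ n₂ 𝕜} {X₁₁ : Matrix n₁ n₁ 𝕜} {X₁₂ : Matrix n₁ n₂ 𝕜}
    {X₂₁ : Matrix n₂ n₁ 𝕜} {X₂₂ : Matrix n₂ n₂ 𝕜} {Q₁₁ : Matrix n₁ n₁ 𝕜}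
    {Q₁₂ : Matrix n₁ n₂ 𝕜} {Q₂₁ : Matrix n₂ n₁ 𝕜} {Q₂₂ : Matrix n₂ n₂ 𝕜}
    (h : (fromBlocks A₁ A₁₂ 0 A₂)ᵀ * fromBlocks X₁₁ X₁₂ X₂₁ X₂₂
      + fromBlocks X₁₁ X₁₂ X₂₁ X₂₂ * fromBlocks A₁ A₁₂ 0 A₂
      + fromBlocks Q₁₁ Q₁₂ Q₂₁ Q₂₂ = 0) :
    A₁ᵀ * X₁₁ + X₁₁ * A₁ + Q₁₁ = 0 ∧ A₁ᵀ * X₁₂ + X₁₂ * A₂ + (X₁₁ * A₁₂ + Q₁₂) = 0 := by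
  rw [fromBlocks_transpose, fromBlocks_multiply, fromBlocks_multiply, fromBlocks_add,
    fromBlocks_add, ← fromBlocks_zero, fromBlocks_inj] at h
  obtain ⟨h₁₁, h₁₂, -, -⟩ := h
  simp only [transpose_zero, Matrix.zero_mul, Matrix.mul_zero, add_zero] at h₁₁ h₁₂
  exact ⟨h₁₁, by rw [← h₁₂]; abel⟩

end Blocks

section Riccati

variable {𝕜 : Type*} [CommRing 𝕜] {n m : Type*} [Fintype n] [Fintype m] [DecidableEq m]
  {X : Matrix n n 𝕜} {B : Matrix n m 𝕜} {W : Matrix m m 𝕜} {F : Matrix m n 𝕜}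

theorem mul_eq_of_eq_inv_mul (hW : IsUnit W.det) (hF : F = W⁻¹ * Bᵀ * X) :
    W * F = Bᵀ * X := by
  rw [hF, Matrix.mul_assoc, ← Matrix.mul_assoc W, Matrix.mul_nonsing_inv _ hW, Matrix.one_mul]

theorem transpose_mul_eq_of_eq_inv_mul (hX : X.IsSymm) (hWsymm : W.IsSymm)
    (hW : IsUnit W.det) (hF : F = W⁻¹ * Bᵀ * X) : Fᵀ * W = X * B := by
  rw [← hWsymm.eq, ← transpose_mul, mul_eq_of_eq_inv_mul hW hF, transpose_mul,
    transpose_transpose, hX.eq]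

theorem lyapunov_closedLoop_of_riccati {A Q : Matrix n n 𝕜} (hX : X.IsSymm) (hWsymm : W.IsSymm)
    (hW : IsUnit W.det) (hF : F = W⁻¹ * Bᵀ * X)
    (hric : Aᵀ * X + X * A + Q - X * B * W⁻¹ * Bᵀ * X = 0) :
    (A - B * F)ᵀ * X + X * (A - B * F) + (Q + Fᵀ * W * F) = 0 := by
  have hFWF : Fᵀ * W * F = X * B * F := by
    rw [transpose_mul_eq_of_eq_inv_mul hX hWsymm hW hF]
  have hFBX : Fᵀ * Bᵀ * X = X * B * F := by
    rw [Matrix.mul_assoc, ← mul_eq_of_eq_inv_mul hW hF, ← Matrix.mul_assoc, hFWF]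
  have hXBF : X * B * F = X * B * W⁻¹ * Bᵀ * X := by
    rw [hF]; simp only [Matrix.mul_assoc]
  rw [← hric, transpose_sub, transpose_mul, Matrix.sub_mul, Matrix.mul_sub, hFWF,
    ← Matrix.mul_assoc, hFBX, ← hXBF]
  abel

end Riccati

end Matrix

namespace IsHurwitz

variable {n k : Type*} [Fintype n] [Fintype k] [DecidableEq n] [DecidableEq k]

theorem sylvester_eq_zero {A₁ : Matrix n n ℝ} {A₂ : Matrix k k ℝ} {X : Matrix n k ℝ}
    (hA₁ : IsHurwitz A₁) (hA₂ : IsHurwitz A₂) (h : A₁ᵀ * X + X * A₂ = 0) : X = 0 := by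
  let f := algebraMap ℝ ℂ
  have hC : (A₁.map f)ᵀ * X.map f = X.map f * -A₂.map f := by
    have := congrArg (Matrix.map · f) (eq_neg_of_add_eq_zero_left h)
    simpa only [Matrix.map_mul, Matrix.map_neg f (map_neg f), transpose_map, Matrix.mul_neg]
      using this
  have hdisj : Disjoint (spectrum ℂ (A₁.map f)ᵀ) (spectrum ℂ (-A₂.map f)) := by
    refine Set.disjoint_left.mpr fun μ hμ₁ hμ₂ => ?_
    rw [Matrix.mem_spectrum_transpose_iff] at hμ₁
    rw [← spectrum.neg_eq, Set.mem_neg] at hμ₂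
    have h₂ := hA₂ _ hμ₂
    rw [Complex.neg_re] at h₂
    linarith [hA₁ _ hμ₁]
  have hX := Matrix.eq_zero_of_mul_eq_mul_of_disjoint_spectrum hdisj hC
  exact Matrix.map_injective f.injective (hX.trans (Matrix.map_zero _ (map_zero f)).symm)

theorem lyapunov_unique {A Q X Y : Matrix n n ℝ} (hA : IsHurwitz A)
    (hX : Aᵀ * X + X * A + Q = 0) (hY : Aᵀ * Y + Y * A + Q = 0) : X = Y := by
  refine sub_eq_zero.mp (sylvester_eq_zero hA hA ?_)
  rw [Matrix.mul_sub, Matrix.sub_mul, ← sub_eq_zero.mpr (hX.trans hY.symm)]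
  abel

end IsHurwitz

theorem stmt7_general {n m p : Type*} [Fintype n] [Fintype m] [Fintype p]
    [DecidableEq n] [DecidableEq m]
    (A Q Xα : Matrix n n ℝ) (B : Matrix n m ℝ) (C : Matrix p n ℝ)
    (R : Matrix m m ℝ) (Fα : Matrix m n ℝ) (Kα : Matrix n p ℝ) (α : ℝ)
    (hR : R.PosDef) (hXα : Xα.IsSymm)
    (hF : Fα = R⁻¹ * Bᵀ * Xα)
    (hric : (A + α • (1 : Matrix n n ℝ))ᵀ * Xα + Xα * (A + α • (1 : Matrix n n ℝ)) + Q
        - Xα * B * R⁻¹ * Bᵀ * Xα = 0)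
    (hA₁ : IsHurwitz (A + α • (1 : Matrix n n ℝ) - B * Fα))
    (hA₂ : IsHurwitz (A + α • (1 : Matrix n n ℝ) - Kα * C))
    (X₁₁ X₁₂ X₂₁ X₂₂ : Matrix n n ℝ)
    (hLyap : (fromBlocks (A + α • (1 : Matrix n n ℝ) - B * Fα) (-(B * Fα)) 0
          (A + α • (1 : Matrix n n ℝ) - Kα * C))ᵀ * fromBlocks X₁₁ X₁₂ X₂₁ X₂₂
        + fromBlocks X₁₁ X₁₂ X₂₁ X₂₂ * fromBlocks (A + α • (1 : Matrix n n ℝ) - B * Fα)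
          (-(B * Fα)) 0 (A + α • (1 : Matrix n n ℝ) - Kα * C)
        + fromBlocks (Q + Fαᵀ * R * Fα) (Fαᵀ * R * Fα) (Fαᵀ * R * Fα) (Fαᵀ * R * Fα) = 0) :
    X₁₁ = Xα ∧ X₁₂ = 0 := by
  have hRsymm : R.IsSymm := hR.1
  have hRdet : IsUnit R.det := (isUnit_iff_isUnit_det R).mp hR.isUnit
  obtain ⟨h₁₁, h₁₂⟩ := lyapunov_fromBlocks_upper hLyap
  have hX₁₁ : X₁₁ = Xα :=
    hA₁.lyapunov_unique h₁₁ (lyapunov_closedLoop_of_riccati hXα hRsymm hRdet hF hric)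
  refine ⟨hX₁₁, hA₁.sylvester_eq_zero hA₂ ?_⟩
  rwa [hX₁₁, Matrix.mul_neg, ← Matrix.mul_assoc,
    ← transpose_mul_eq_of_eq_inv_mul hXα hRsymm hRdet hF, neg_add_cancel, add_zero] at h₁₂

theorem stmt7 {n m p : Type*} [Fintype n] [Fintype m] [Fintype p]
    [DecidableEq n] [DecidableEq m] [DecidableEq p]
    (A Q Xα : Matrix n n ℝ) (B : Matrix n m ℝ) (C : Matrix p n ℝ)
    (R : Matrix m m ℝ) (Fα : Matrix m n ℝ) (Kα : Matrix n p ℝ) (α : ℝ)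
    (hQ : Q.PosSemidef) (hR : R.PosDef) (hXα : Xα.IsSymm)
    (hF : Fα = R⁻¹ * Bᵀ * Xα)
    (hric : (A + α • (1 : Matrix n n ℝ))ᵀ * Xα + Xα * (A + α • (1 : Matrix n n ℝ)) + Q
        - Xα * B * R⁻¹ * Bᵀ * Xα = 0)
    (hA₁ : IsHurwitz (A + α • (1 : Matrix n n ℝ) - B * Fα))
    (hA₂ : IsHurwitz (A + α • (1 : Matrix n n ℝ) - Kα * C))
    (X₁₁ X₁₂ X₂₁ X₂₂ : Matrix n n ℝ)
    (hLyap : (fromBlocks (A + α • (1 : Matrix n n ℝ) - B * Fα) (-(B * Fα)) 0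
          (A + α • (1 : Matrix n n ℝ) - Kα * C))ᵀ * fromBlocks X₁₁ X₁₂ X₂₁ X₂₂
        + fromBlocks X₁₁ X₁₂ X₂₁ X₂₂ * fromBlocks (A + α • (1 : Matrix n n ℝ) - B * Fα)
          (-(B * Fα)) 0 (A + α • (1 : Matrix n n ℝ) - Kα * C)
        + fromBlocks (Q + Fαᵀ * R * Fα) (Fαᵀ * R * Fα) (Fαᵀ * R * Fα) (Fαᵀ * R * Fα) = 0) :
    X₁₁ = Xα ∧ X₁₂ = 0 :=
  stmt7_general A Q Xα B C R Fα Kα α hR hXα hF hric hA₁ hA₂ X₁₁ X₁₂ X₂₁ X₂₂ hLyap
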